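/- arXiv:2310.16330 — 2 statements merged into one kernel-verified Lean document; each statement's English description precedes it below -/
import Mathlib

section
/- Let A, B be associative unital K-algebras and v : A° → B° a morphism of coalgebras between their restricted duals. For each finite-codimensional two-sided ideal I of A there exists a finite-codimensional two-sided ideal J of B such that v((A/I)*) ⊆ (B/J)*, and the induced K-linear map u_I : B/I_v → A/I (the transpose of v restricted to (A/I)*, where I_v is the largest such J) is a homomorphism of K-algebras. -/
/-! Setup: for an associative unital algebra `A` over a field `K`, two-sided ideals are
modeled by ring congruences `c : RingCon A` (the ideal being `{a | c a 0}`, with quotient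
ring `c.Quotient`); "finite codimension" means the quotient is finite-dimensional over `K`.
`S K A` is the collection of such congruences, `hatCarrier K A` is the completion
`Â = lim← A/I` (as the subalgebra of compatible families in the product of the quotients,
each quotient carrying the discrete topology), `iotaA : A → Â` the canonical map, and
`projHat c : Â → A/𝔞` the canonical projection. -/

variable {K : Type*} [Field K] {A : Type*} [Ring A] [Algebra K A]

namespace PaperStmt

noncomputable instance ringConAlgebra (c : RingCon A) : Algebra K c.Quotient where
  smul := (· • ·)
  algebraMap := (RingCon.mk' c).comp (algebraMap K A)
  commutes' := fun k x => Quotient.inductionOn' x fun a => by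
    show ((algebraMap K A k : A) : c.Quotient) * (a : c.Quotient)
        = (a : c.Quotient) * ((algebraMap K A k : A) : c.Quotient)
    rw [← RingCon.coe_mul, ← RingCon.coe_mul, Algebra.commutes]
  smul_def' := fun k x => Quotient.inductionOn' x fun a => by
    show k • (a : c.Quotient) = ((algebraMap K A k : A) : c.Quotient) * (a : c.Quotient)
    rw [← RingCon.coe_smul, ← RingCon.coe_mul, Algebra.smul_def]

variable (K A)

/-- The set of two-sided ideals (congruences) of finite codimension. -/
def S : Type _ := {c : RingCon A // FiniteDimensional K c.Quotient}

variable {K A}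

/-- The factor (transition) map between quotients. -/
def factorHom {c d : RingCon A} (h : c ≤ d) : c.Quotient →+* d.Quotient where
  toFun := Quotient.map' id fun a b hab => h hab
  map_one' := rfl
  map_mul' x y := Quotient.inductionOn₂' x y fun _ _ => rfl
  map_zero' := rfl
  map_add' x y := Quotient.inductionOn₂' x y fun _ _ => rfl

def factorAlg {c d : RingCon A} (h : c ≤ d) : c.Quotient →ₐ[K] d.Quotient :=
  { factorHom h with commutes' := fun _ => rfl }

@[simp] theorem factorHom_coe {c d : RingCon A} (h : c ≤ d) (a : A) :
    factorHom h (a : c.Quotient) = (a : d.Quotient) := rfl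

variable (K A)

/-- The completion `Â` of `A` with respect to two-sided ideals of finite codimension,
as the subalgebra of compatible families in the product of the quotients. -/
def hatCarrier : Subalgebra K (Π c : S K A, c.1.Quotient) where
  carrier := {x | ∀ (c d : S K A) (h : c.1 ≤ d.1), factorHom h (x c) = x d}
  mul_mem' {x y} hx hy := fun c d h => by
    show factorHom h (x c * y c) = x d * y d
    rw [map_mul, hx c d h, hy c d h]
  add_mem' {x y} hx hy := fun c d h => by
    show factorHom h (x c + y c) = x d + y d
    rw [map_add, hx c d h, hy c d h]
  one_mem' := fun c d h => map_one _
  algebraMap_mem' := fun k c d h => rfl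

/-- The canonical map `ι : A → Â`. -/
def iotaA : A →ₐ[K] ↥(hatCarrier K A) where
  toFun a := ⟨fun c => (a : c.1.Quotient), fun c d h => rfl⟩
  map_one' := rfl
  map_mul' a b := rfl
  map_zero' := rfl
  map_add' a b := rfl
  commutes' k := rfl

/-- Each quotient `A/I` carries the discrete topology, so that `Â` (as a subspace of the
product) carries the projective-limit topology. -/
instance (c : RingCon A) : TopologicalSpace c.Quotient := ⊥

variable {K A}

/-- The canonical projection `p_𝔞 : Â → A/𝔞`. -/
noncomputable def projHat (c : S K A) : ↥(hatCarrier K A) →ₐ[K] c.1.Quotient :=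
  (Pi.evalAlgHom K _ c).comp (hatCarrier K A).val

end PaperStmt

namespace PaperStmt

variable (K A)

/-- The restricted (Sweedler) dual `A°`: functionals on `A` vanishing on some two-sided
ideal of finite codimension. -/
noncomputable def restrictedDual : Submodule K (A →ₗ[K] K) where
  carrier := {α | ∃ c : RingCon A, FiniteDimensional K c.Quotient ∧ ∀ a, c a 0 → α a = 0}
  zero_mem' := by
    refine ⟨⊤, ?_, fun a _ => rfl⟩
    have : Subsingleton (⊤ : RingCon A).Quotient :=
      ⟨fun x y => Quotient.inductionOn₂' x y fun a b => Quotient.sound' trivial⟩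
    exact Module.Finite.of_surjective (0 : K →ₗ[K] (⊤ : RingCon A).Quotient)
      (fun x => ⟨0, Subsingleton.elim _ _⟩)
  add_mem' := by
    rintro α β ⟨c, hc, hvc⟩ ⟨d, hd, hvd⟩
    refine ⟨c ⊓ d, ?_, fun a ha => ?_⟩
    · haveI := hc; haveI := hd
      have hinj : Function.Injective
          (((factorAlg (K := K) (inf_le_left : c ⊓ d ≤ c)).toLinearMap).prod
            ((factorAlg (K := K) (inf_le_right : c ⊓ d ≤ d)).toLinearMap)) := by
        intro x y
        refine Quotient.inductionOn₂' x y (fun a b hab => ?_)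
        have h1 : (a : c.Quotient) = (b : c.Quotient) := congrArg Prod.fst hab
        have h2 : (a : d.Quotient) = (b : d.Quotient) := congrArg Prod.snd hab
        exact ((c ⊓ d).eq).2 (RingCon.inf_iff_and.2 ⟨(c.eq).1 h1, (d.eq).1 h2⟩)
      exact FiniteDimensional.of_injective _ hinj
    · have : c a 0 ∧ d a 0 := ⟨inf_le_left (α := RingCon A) ha, inf_le_right (α := RingCon A) ha⟩
      simp [map_add, hvc a this.1, hvd a this.2]
  smul_mem' := by
    rintro k α ⟨c, hc, hv⟩
    exact ⟨c, hc, fun a ha => by simp [hv a ha]⟩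

end PaperStmt

open PaperStmt

set_option synthInstance.maxHeartbeats 1000000
set_option maxHeartbeats 1000000

/-! Since `A/I` is finite-dimensional, `A/I ≅ (A/I)**`, so the restriction of `v` to
`(A/I)* ⊆ A°` has a transpose `u : B → A/I`, characterised by `f (u b) = (v f) b`.
Points of `A/I` are separated by functionals, so `u` is multiplicative as soon as
`f (u (b b')) = f (u b * u b')` for all `f`; expanding `x` in a basis `eᵢ` gives the
decomposition `f (x y) = ∑ᵢ eᵢ* x * f (eᵢ y)` of `Δf`, and comultiplicativity of `v` turns
it into exactly this identity. The counit gives `u 1 = 1`. Finally `J := ker u` has finite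
codimension because `B/J` embeds into `A/I`. -/

namespace PaperStmt

open Module

section Transpose

variable {V W : Type*} [AddCommGroup V] [Module K V] [FiniteDimensional K V]
  [AddCommGroup W] [Module K W]

noncomputable def dualTranspose (T : Dual K V →ₗ[K] Dual K W) : W →ₗ[K] V :=
  (evalEquiv K V).symm.toLinearMap ∘ₗ T.flip

@[simp] theorem apply_dualTranspose (T : Dual K V →ₗ[K] Dual K W) (f : Dual K V) (w : W) :
    f (dualTranspose T w) = T f w :=
  apply_evalEquiv_symm_apply K V f _

theorem eq_of_forall_dual_apply_eq {x y : V} (h : ∀ f : Dual K V, f x = f y) : x = y :=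
  eval_apply_injective K (LinearMap.ext h)

end Transpose

theorem dual_mul_eq_sum_coord {Q ι : Type*} [Fintype ι] [NonUnitalNonAssocRing Q] [Module K Q]
    [IsScalarTower K Q Q] (e : Basis ι K Q) (f : Dual K Q) (x y : Q) :
    f (x * y) = ∑ i, e.coord i x * f (e i * y) := by
  conv_lhs => rw [← e.sum_repr x]
  simp only [Finset.sum_mul, map_sum, smul_mul_assoc, map_smul, smul_eq_mul, Basis.coord_apply]

section CoalgebraTranspose

variable {Q B : Type*} [Ring Q] [Algebra K Q] [FiniteDimensional K Q] [Ring B] [Algebra K B]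
  (T : Dual K Q →ₗ[K] Dual K B)

/-- `T : Q* → B*` respects every decomposition of a comultiplication `Δf = ∑ₖ βₖ ⊗ γₖ`. -/
def IsComultiplicative : Prop :=
  ∀ (f : Dual K Q) (N : ℕ) (β γ : Fin N → Dual K Q),
    (∀ x y, f (x * y) = ∑ k, β k x * γ k y) →
    ∀ b b', T f (b * b') = ∑ k, T (β k) b * T (γ k) b'

theorem dualTranspose_one (hT : ∀ f, T f 1 = f 1) : dualTranspose T 1 = 1 :=
  eq_of_forall_dual_apply_eq (K := K) fun f => by rw [apply_dualTranspose, hT]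

theorem dualTranspose_mul (hT : IsComultiplicative T) (b b' : B) :
    dualTranspose T (b * b') = dualTranspose T b * dualTranspose T b' := by
  let e := finBasis K Q
  refine eq_of_forall_dual_apply_eq (K := K) fun f => ?_
  rw [dual_mul_eq_sum_coord e, apply_dualTranspose,
    hT f _ (fun i => e.coord i) (fun i => f ∘ₗ LinearMap.mulLeft K (e i))
      (dual_mul_eq_sum_coord e f)]
  simp only [← apply_dualTranspose, LinearMap.comp_apply, LinearMap.mulLeft_apply]

noncomputable def dualTransposeAlgHom (hT₁ : ∀ f, T f 1 = f 1) (hT₂ : IsComultiplicative T) :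
    B →ₐ[K] Q :=
  AlgHom.ofLinearMap (dualTranspose T) (dualTranspose_one T hT₁) (dualTranspose_mul T hT₂)

end CoalgebraTranspose

noncomputable def dualOfQuotient (c : S K A) : Dual K c.1.Quotient →ₗ[K] restrictedDual K A :=
  LinearMap.codRestrict _ (RingCon.mkₐ K c.1).toLinearMap.dualMap fun f =>
    ⟨c.1, c.2, fun a ha => by simp [(RingCon.eq c.1).2 ha]⟩

@[simp] theorem dualOfQuotient_apply (c : S K A) (f : Dual K c.1.Quotient) (a : A) :
    (dualOfQuotient c f).1 a = f a := rfl

theorem exists_dualOfQuotient_eq (c : S K A) {α : A →ₗ[K] K} (hmem : α ∈ restrictedDual K A)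
    (hα : ∀ a, c.1 a 0 → α a = 0) : ∃ f, dualOfQuotient c f = ⟨α, hmem⟩ := by
  have hrange : α ∈ LinearMap.range (RingCon.mkₐ K c.1).toLinearMap.dualMap := by
    rw [LinearMap.range_dualMap_eq_dualAnnihilator_ker]
    exact (Submodule.mem_dualAnnihilator α).2 fun a ha => hα a ((RingCon.eq c.1).1 ha)
  obtain ⟨f, hf⟩ := hrange
  exact ⟨f, Subtype.ext hf⟩

end PaperStmt

/-- **Transposing a coalgebra morphism `v : A° → B°`.** Let `v` be a `K`-linear map between
the restricted duals which is a morphism of coalgebras: it preserves the counit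
(`(v α)(1) = α(1)`) and the comultiplication (whenever `α(a a') = ∑ₖ βₖ(a) γₖ(a')` is a
decomposition of `Δα` within `A°`, then `(v α)(b b') = ∑ₖ (v βₖ)(b) (v γₖ)(b')`).  Then for
every two-sided ideal `I` of `A` of finite codimension (congruence `c`) there is a
two-sided ideal `J` of `B` of finite codimension (congruence `d`) with
`v((A/I)*) ⊆ (B/J)*`, i.e. `v α` vanishes on `J` whenever `α` vanishes on `I`; and the
transposed map `u_I : B/J → A/I` (characterized by `(v α)(b) = α(u_I(b))`, i.e.
`(v α) b = α a` whenever `u (b mod J) = a mod I`) is a homomorphism of `K`-algebras. -/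
theorem coalgebra_morphism_transpose
    {B : Type*} [Ring B] [Algebra K B]
    (v : ↥(restrictedDual K A) →ₗ[K] ↥(restrictedDual K B))
    (hcounit : ∀ α : ↥(restrictedDual K A), (v α).1 1 = α.1 1)
    (hcomul : ∀ (α : ↥(restrictedDual K A)) (N : ℕ)
        (β γ : Fin N → ↥(restrictedDual K A)),
        (∀ a a' : A, α.1 (a * a') = ∑ k, (β k).1 a * (γ k).1 a') →
        ∀ b b' : B, (v α).1 (b * b') = ∑ k, (v (β k)).1 b * (v (γ k)).1 b') :
    ∀ c : S K A, ∃ d : S K B,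
      (∀ (α : A →ₗ[K] K) (hmem : α ∈ restrictedDual K A),
        (∀ a : A, c.1 a 0 → α a = 0) →
        ∀ b : B, d.1 b 0 → (v ⟨α, hmem⟩).1 b = 0) ∧
      ∃ u : d.1.Quotient →ₐ[K] c.1.Quotient,
        ∀ (α : A →ₗ[K] K) (hmem : α ∈ restrictedDual K A),
          (∀ a : A, c.1 a 0 → α a = 0) →
          ∀ (b : B) (a : A),
            u (b : d.1.Quotient) = (a : c.1.Quotient) → (v ⟨α, hmem⟩).1 b = α a := by
  intro c
  have := c.2
  let T := (restrictedDual K B).subtype ∘ₗ v ∘ₗ dualOfQuotient c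
  let w : B →ₐ[K] c.1.Quotient :=
    dualTransposeAlgHom T
      (fun f => hcounit (dualOfQuotient c f))
      (fun f N β γ h => hcomul _ N _ _ fun a a' => h a a')
  have hv : ∀ (α : A →ₗ[K] K) (hmem : α ∈ restrictedDual K A), (∀ a, c.1 a 0 → α a = 0) →
      ∃ f : Module.Dual K c.1.Quotient, (∀ a, α a = f a) ∧ ∀ b, (v ⟨α, hmem⟩).1 b = f (w b) := by
    intro α hmem hα
    obtain ⟨f, hf⟩ := exists_dualOfQuotient_eq c hmem hα
    refine ⟨f, fun a => by rw [← dualOfQuotient_apply, hf], fun b => ?_⟩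
    rw [← hf]
    exact (apply_dualTranspose T f b).symm
  refine ⟨⟨RingCon.ker w.toRingHom, .of_injective (RingCon.kerLiftₐ w).toLinearMap
    (RingCon.kerLiftₐ_injective w)⟩,
    fun α hmem hα b hb => ?_, RingCon.kerLiftₐ w, fun α hmem hα b a hba => ?_⟩
  · obtain ⟨f, -, hf⟩ := hv α hmem hα
    have hwb : w b = 0 := ((RingCon.ker_apply _).1 hb).trans (map_zero w)
    rw [hf, hwb, map_zero]
  · obtain ⟨f, hfα, hf⟩ := hv α hmem hα
    rw [hf, hfα, ← hba]
    rfl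
end

section
/- Let K be an algebraically closed field and A a commutative K-algebra of finite type. Then the completion Â = lim←_I A/I over all ideals I of finite codimension is isomorphic as a K-algebra to the product ∏_𝔪 Â_𝔪 over all maximal ideals 𝔪 of A, where Â_𝔪 = lim←_n A/𝔪ⁿ is the 𝔪-adic completion. -/
namespace Stmt12

variable (K : Type*) [Field K] (A : Type*) [CommRing A] [Algebra K A]

/-- The directed set of ideals of finite codimension. -/
def S : Type _ := {I : Ideal A // FiniteDimensional K (A ⧸ I)}

/-- The completion `Â = lim← A/I` over ideals of finite codimension, realized as the
subalgebra of compatible families in the product of the quotients. -/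
def hatCarrier : Subalgebra K (Π I : S K A, A ⧸ I.1) where
  carrier := {x | ∀ (I J : S K A) (h : I.1 ≤ J.1), Ideal.Quotient.factor (S := I.1) (T := J.1) h (x I) = x J}
  mul_mem' {x y} hx hy := fun I J h => by
    show Ideal.Quotient.factor (S := I.1) (T := J.1) h (x I * y I) = x J * y J
    rw [map_mul, hx I J h, hy I J h]
  add_mem' {x y} hx hy := fun I J h => by
    show Ideal.Quotient.factor (S := I.1) (T := J.1) h (x I + y I) = x J + y J
    rw [map_add, hx I J h, hy I J h]
  one_mem' := fun I J h => map_one _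
  algebraMap_mem' := fun k I J h => by
    show Ideal.Quotient.factor (S := I.1) (T := J.1) h (algebraMap K (A ⧸ I.1) k) = algebraMap K (A ⧸ J.1) k
    simp [← Ideal.Quotient.algebraMap_eq, ← Ideal.Quotient.mk_algebraMap,
      Ideal.Quotient.factor_mk]

noncomputable instance (m : MaximalSpectrum A) : Algebra K (AdicCompletion m.asIdeal A) :=
  RingHom.toAlgebra ((algebraMap A (AdicCompletion m.asIdeal A)).comp (algebraMap K A))

/-! Every ideal `I` of finite codimension contains `⨅ m ∈ F, m ^ N` for a finite set `F` of
maximal ideals: `A ⧸ I` is Artinian, so its nilradical, the intersection of its finitely many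
maximal ideals, is nilpotent. Conversely the ideals `m ^ n` and `⨅ m ∈ F, m ^ N` have finite
codimension, since all primes above them are maximal and a finite type `K`-algebra of Krull
dimension zero is finite. So a compatible family is determined by its components at the powers
`m ^ n`, which is injectivity; for surjectivity, the Chinese remainder theorem approximates a
family of adic elements modulo `⨅ m ∈ F, m ^ N` by a single element of `A`, and the classes of
these approximations modulo the ideals of finite codimension form the preimage. -/

section General

variable {R : Type*} [CommRing R]

theorem _root_.Ideal.IsPrime.isMaximal_of_pow_le {m P : Ideal R} (hP : P.IsPrime)
    (hm : m.IsMaximal) {n : ℕ} (h : m ^ n ≤ P) : P.IsMaximal :=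
  hm.eq_of_le hP.ne_top (hP.le_of_pow_le h) ▸ hm

theorem _root_.Ideal.IsPrime.isMaximal_of_biInf_pow_le {F : Finset (MaximalSpectrum R)} {N : ℕ}
    {P : Ideal R} (hP : P.IsPrime) (h : ⨅ m ∈ F, m.asIdeal ^ N ≤ P) : P.IsMaximal := by
  rw [← Finset.inf_eq_iInf, hP.inf_le'] at h
  obtain ⟨m, -, hle⟩ := h
  exact hP.isMaximal_of_pow_le m.isMaximal hle

theorem _root_.IsArtinianRing.exists_biInf_pow_le (I : Ideal R) [IsArtinianRing (R ⧸ I)] :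
    ∃ (F : Finset (MaximalSpectrum R)) (N : ℕ), ⨅ m ∈ F, m.asIdeal ^ N ≤ I := by
  classical
  have := Fintype.ofFinite (MaximalSpectrum (R ⧸ I))
  obtain ⟨N, hN⟩ := IsArtinianRing.isNilpotent_nilradical (R := R ⧸ I)
  rw [IsArtinianRing.nilradical_pow_eq_iInf] at hN
  let π := Ideal.Quotient.mk I
  let comap (M : MaximalSpectrum (R ⧸ I)) : MaximalSpectrum R :=
    ⟨M.asIdeal.comap π,
      Ideal.comap_isMaximal_of_surjective π Ideal.Quotient.mk_surjective (H := M.isMaximal)⟩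
  refine ⟨Finset.univ.image comap, N, fun a ha => ?_⟩
  suffices π a ∈ ⨅ M : MaximalSpectrum (R ⧸ I), M.asIdeal ^ N by
    rwa [hN, Ideal.zero_eq_bot, Ideal.mem_bot, Ideal.Quotient.eq_zero_iff_mem] at this
  refine Ideal.mem_iInf.mpr fun M => Ideal.le_comap_pow π N ?_
  exact Ideal.mem_iInf.mp (Ideal.mem_iInf.mp ha (comap M)) (by simp)

theorem _root_.AdicCompletion.factor_evalₐ (I : Ideal R) {m n : ℕ} (h : m ≤ n)
    (x : AdicCompletion I R) :
    Ideal.Quotient.factor (Ideal.pow_le_pow_right h) (AdicCompletion.evalₐ I n x) =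
      AdicCompletion.evalₐ I m x := by
  obtain ⟨x, rfl⟩ := AdicCompletion.mk_surjective I R x
  simp only [AdicCompletion.evalₐ_mk, Ideal.Quotient.factor_mk]
  rw [Ideal.Quotient.eq, ← SModEq.sub_mem]
  simpa using (x.property h).symm

end General

variable {A} in
theorem _root_.finiteDimensional_quotient_of_forall_isPrime_isMaximal [Algebra.FiniteType K A]
    {I : Ideal A} (h : ∀ P : Ideal A, P.IsPrime → I ≤ P → P.IsMaximal) :
    FiniteDimensional K (A ⧸ I) := by
  rw [FiniteDimensional, Module.finite_iff_krullDimLE_zero,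
    Ideal.krullDimLE_zero_quotient_iff_forall_minimalPrimes_isMaximal]
  exact fun P hP => h P hP.1.1 hP.1.2

section Approximation

variable {R : Type*} [CommRing R] {y : Π m : MaximalSpectrum R, AdicCompletion m.asIdeal R}

variable (y) in
def Approximates (F : Finset (MaximalSpectrum R)) (N : ℕ) (r : R) : Prop :=
  ∀ m ∈ F, Ideal.Quotient.mk (m.asIdeal ^ N) r = AdicCompletion.evalₐ m.asIdeal N (y m)

variable (y) in
theorem exists_approximates (F : Finset (MaximalSpectrum R)) (N : ℕ) :
    ∃ r, Approximates y F N r := by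
  have hcop : Pairwise fun m m' : F => IsCoprime (m.1.asIdeal ^ N) (m'.1.asIdeal ^ N) :=
    fun m m' hne => (MaximalSpectrum.isCoprime_of_ne (Subtype.coe_ne_coe.mpr hne)).pow
  obtain ⟨r, hr⟩ := Ideal.pi_quotient_surjective hcop
    fun m : F => AdicCompletion.evalₐ m.1.asIdeal N (y m)
  exact ⟨r, fun m hm => hr ⟨m, hm⟩⟩

theorem Approximates.mono {F F' : Finset (MaximalSpectrum R)} {N N' : ℕ} {r : R}
    (hF : F ⊆ F') (hN : N ≤ N') (h : Approximates y F' N' r) : Approximates y F N r :=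
  fun m hm => by
    rw [← AdicCompletion.factor_evalₐ m.asIdeal hN, ← h m (hF hm), Ideal.Quotient.factor_mk]

theorem Approximates.sub_mem {F : Finset (MaximalSpectrum R)} {N : ℕ} {r r' : R}
    (h : Approximates y F N r) (h' : Approximates y F N r') : r - r' ∈ ⨅ m ∈ F, m.asIdeal ^ N :=
  Ideal.mem_iInf.mpr fun m => Ideal.mem_iInf.mpr fun hm =>
    Ideal.Quotient.eq.mp ((h m hm).trans (h' m hm).symm)

variable (y) in
def ApproximatesMod (I : Ideal R) (r : R) : Prop :=
  ∃ (F : Finset (MaximalSpectrum R)) (N : ℕ), ⨅ m ∈ F, m.asIdeal ^ N ≤ I ∧ Approximates y F N r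

variable (y) in
theorem exists_approximatesMod (I : Ideal R) [IsArtinianRing (R ⧸ I)] :
    ∃ r, ApproximatesMod y I r := by
  obtain ⟨F, N, hle⟩ := IsArtinianRing.exists_biInf_pow_le I
  obtain ⟨r, hr⟩ := exists_approximates y F N
  exact ⟨r, F, N, hle, hr⟩

theorem ApproximatesMod.mono {I J : Ideal R} {r : R} (hIJ : I ≤ J) (h : ApproximatesMod y I r) :
    ApproximatesMod y J r :=
  let ⟨F, N, hle, hr⟩ := h
  ⟨F, N, hle.trans hIJ, hr⟩

theorem ApproximatesMod.mk_eq {I : Ideal R} {r r' : R} (h : ApproximatesMod y I r)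
    (h' : ApproximatesMod y I r') : Ideal.Quotient.mk I r = Ideal.Quotient.mk I r' := by
  classical
  obtain ⟨F, N, hle, hr⟩ := h
  obtain ⟨F', N', hle', hr'⟩ := h'
  obtain ⟨s, hs⟩ := exists_approximates y (F ∪ F') (max N N')
  have hrs := hr.sub_mem (hs.mono Finset.subset_union_left (le_max_left N N'))
  have hr's := hr'.sub_mem (hs.mono Finset.subset_union_right (le_max_right N N'))
  rw [Ideal.Quotient.eq, ← sub_sub_sub_cancel_right r r' s]
  exact sub_mem (hle hrs) (hle' hr's)

variable (y) in
noncomputable def approxMod (I : Ideal R) [IsArtinianRing (R ⧸ I)] : R ⧸ I :=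
  Ideal.Quotient.mk I (exists_approximatesMod y I).choose

theorem approxMod_eq {I : Ideal R} [IsArtinianRing (R ⧸ I)] {r : R}
    (hr : ApproximatesMod y I r) : approxMod y I = Ideal.Quotient.mk I r :=
  (exists_approximatesMod y I).choose_spec.mk_eq hr

theorem factor_approxMod {I J : Ideal R} [IsArtinianRing (R ⧸ I)] [IsArtinianRing (R ⧸ J)]
    (h : I ≤ J) : Ideal.Quotient.factor h (approxMod y I) = approxMod y J :=
  (approxMod_eq ((exists_approximatesMod y I).choose_spec.mono h)).symm

end Approximation

section Comparison

variable {K A}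

instance S.isArtinianRing_quotient (I : S K A) : IsArtinianRing (A ⧸ I.1) :=
  have := I.2
  .of_finite K (A ⧸ I.1)

section FiniteType

variable [Algebra.FiniteType K A]

instance _root_.MaximalSpectrum.finiteDimensional_quotient_pow (m : MaximalSpectrum A) (n : ℕ) :
    FiniteDimensional K (A ⧸ m.asIdeal ^ n) :=
  finiteDimensional_quotient_of_forall_isPrime_isMaximal K fun _ hP h =>
    hP.isMaximal_of_pow_le m.isMaximal h

instance _root_.MaximalSpectrum.finiteDimensional_quotient_biInf_pow
    (F : Finset (MaximalSpectrum A)) (N : ℕ) :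
    FiniteDimensional K (A ⧸ ⨅ m ∈ F, m.asIdeal ^ N) :=
  finiteDimensional_quotient_of_forall_isPrime_isMaximal K fun _ hP h =>
    hP.isMaximal_of_biInf_pow_le h

end FiniteType

namespace hatCarrier

def proj (I : Ideal A) [FiniteDimensional K (A ⧸ I)] : hatCarrier K A →ₐ[K] A ⧸ I :=
  (Pi.evalAlgHom K (fun I : S K A => A ⧸ I.1) ⟨I, ‹_›⟩).comp (hatCarrier K A).val

theorem factor_proj {I J : Ideal A} [FiniteDimensional K (A ⧸ I)] [FiniteDimensional K (A ⧸ J)]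
    (h : I ≤ J) (x : hatCarrier K A) : Ideal.Quotient.factor h (proj I x) = proj J x :=
  x.2 ⟨I, ‹_›⟩ ⟨J, ‹_›⟩ h

variable (K) in
noncomputable def ofPiAdicCompletion (y : Π m : MaximalSpectrum A, AdicCompletion m.asIdeal A) :
    hatCarrier K A :=
  ⟨fun I => approxMod y I.1, fun _ _ h => factor_approxMod h⟩

theorem proj_ofPiAdicCompletion (y : Π m : MaximalSpectrum A, AdicCompletion m.asIdeal A)
    {I : Ideal A} [FiniteDimensional K (A ⧸ I)] {r : A} (hr : ApproximatesMod y I r) :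
    proj I (ofPiAdicCompletion K y) = Ideal.Quotient.mk I r :=
  have := IsArtinianRing.of_finite K (A ⧸ I)
  approxMod_eq hr

variable [Algebra.FiniteType K A]

theorem proj_eq_zero_of_forall_pow {x : hatCarrier K A}
    (hx : ∀ (m : MaximalSpectrum A) n, proj (m.asIdeal ^ n) x = 0) (I : Ideal A)
    [FiniteDimensional K (A ⧸ I)] : proj I x = 0 := by
  have := IsArtinianRing.of_finite K (A ⧸ I)
  obtain ⟨F, N, hle⟩ := IsArtinianRing.exists_biInf_pow_le I
  obtain ⟨a, ha⟩ := Ideal.Quotient.mk_surjective (proj (⨅ m ∈ F, m.asIdeal ^ N) x)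
  have haF : a ∈ ⨅ m ∈ F, m.asIdeal ^ N :=
    Ideal.mem_iInf.mpr fun m => Ideal.mem_iInf.mpr fun hm => by
      rw [← Ideal.Quotient.eq_zero_iff_mem, ← hx m N,
        ← factor_proj (iInf₂_le m hm : ⨅ m ∈ F, m.asIdeal ^ N ≤ _), ← ha, Ideal.Quotient.factor_mk]
  rw [← factor_proj hle, ← ha, Ideal.Quotient.factor_mk, Ideal.Quotient.eq_zero_iff_mem]
  exact hle haF

theorem factorPow_comp_proj (m : MaximalSpectrum A) {i j : ℕ} (h : i ≤ j) :
    (Ideal.Quotient.factorPow m.asIdeal h).comp (proj (K := K) (m.asIdeal ^ j)).toRingHom =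
      (proj (m.asIdeal ^ i)).toRingHom :=
  RingHom.ext (factor_proj (Ideal.pow_le_pow_right h))

noncomputable def toAdicCompletion (m : MaximalSpectrum A) :
    hatCarrier K A →ₐ[K] AdicCompletion m.asIdeal A :=
  { AdicCompletion.liftRingHom m.asIdeal _ (factorPow_comp_proj m) with
    commutes' := fun k => AdicCompletion.ext_evalₐ fun n =>
      (AdicCompletion.evalₐ_liftRingHom _ _ (factorPow_comp_proj m) n _).trans <| by
        rw [RingHom.algebraMap_toAlgebra]
        simp only [AlgHom.toRingHom_eq_coe, RingHom.coe_coe, AlgHom.commutes, RingHom.coe_comp,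
          Function.comp_apply, AdicCompletion.algebraMap_apply, Algebra.algebraMap_self,
          RingHomCompTriple.comp_apply, AdicCompletion.evalₐ_of, Ideal.Quotient.mk_algebraMap] }

theorem evalₐ_toAdicCompletion (m : MaximalSpectrum A) (n : ℕ) (x : hatCarrier K A) :
    AdicCompletion.evalₐ m.asIdeal n (toAdicCompletion m x) = proj (m.asIdeal ^ n) x :=
  AdicCompletion.evalₐ_liftRingHom _ _ (factorPow_comp_proj m) _ _

variable (K A) in
noncomputable def toPiAdicCompletion :
    hatCarrier K A →ₐ[K] Π m : MaximalSpectrum A, AdicCompletion m.asIdeal A :=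
  AlgHom.pi toAdicCompletion

theorem toPiAdicCompletion_injective : Function.Injective (toPiAdicCompletion K A) := by
  refine (injective_iff_map_eq_zero _).mpr fun x hx => Subtype.ext <| funext fun I => ?_
  have := I.2
  refine proj_eq_zero_of_forall_pow (fun m n => ?_) I.1
  rw [← evalₐ_toAdicCompletion]
  exact (congrArg (AdicCompletion.evalₐ m.asIdeal n) (congrFun hx m)).trans (map_zero _)

theorem toPiAdicCompletion_ofPiAdicCompletion
    (y : Π m : MaximalSpectrum A, AdicCompletion m.asIdeal A) :
    toPiAdicCompletion K A (ofPiAdicCompletion K y) = y := by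
  refine funext fun m => AdicCompletion.ext_evalₐ fun n => ?_
  obtain ⟨r, hr⟩ := Ideal.Quotient.mk_surjective (AdicCompletion.evalₐ m.asIdeal n (y m))
  have hrm : ApproximatesMod y (m.asIdeal ^ n) r :=
    ⟨{m}, n, iInf₂_le m (Finset.mem_singleton_self m), by simpa [Approximates] using hr⟩
  exact (evalₐ_toAdicCompletion m n _).trans ((proj_ofPiAdicCompletion y hrm).trans hr)

theorem toPiAdicCompletion_surjective : Function.Surjective (toPiAdicCompletion K A) :=
  fun y => ⟨ofPiAdicCompletion K y, toPiAdicCompletion_ofPiAdicCompletion y⟩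

end hatCarrier

end Comparison

theorem completion_eq_prod_adicCompletions [Algebra.FiniteType K A] :
    Nonempty (↥(hatCarrier K A) ≃ₐ[K]
      (Π m : MaximalSpectrum A, AdicCompletion m.asIdeal A)) :=
  ⟨AlgEquiv.ofBijective (hatCarrier.toPiAdicCompletion K A)
    ⟨hatCarrier.toPiAdicCompletion_injective, hatCarrier.toPiAdicCompletion_surjective⟩⟩

end Stmt12
end
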